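/- Let d ≥ 1 be an integer, −2 < s < 0, γ > 0, α > −s, and V := γ|·|^α. Then δ_0, the Dirac unit point mass at the origin of ℝ^d, is not a minimizer of I_{s,V}: there exists a Borel probability measure μ on ℝ^d with I_{s,V}(μ) < I_{s,V}(δ_0) = 0. -/

import Mathlib

open MeasureTheory Real
open scoped ENNReal

noncomputable section

/-- Euclidean space `ℝ^d`. -/
abbrev Esp (d : ℕ) := EuclideanSpace ℝ (Fin d)

open Classical in
/-- Riesz kernel with values in the extended reals: `K_s(x) = |x|^(-s)` for `s > 0`,
`-|x|^(-s)` for `-2 < s < 0`, `-log |x|` for `s = 0`, with conventions `K_s(0) = +∞`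
for `s ≥ 0` and `K_s(0) = 0` for `s < 0`. -/
def rieszK (d : ℕ) (s : ℝ) (x : Esp d) : EReal :=
  if x = 0 then (if 0 ≤ s then (⊤ : EReal) else (0 : EReal))
  else if 0 < s then ((‖x‖ ^ (-s) : ℝ) : EReal)
  else if s = 0 then ((-Real.log ‖x‖ : ℝ) : EReal)
  else ((-(‖x‖ ^ (-s)) : ℝ) : EReal)

open Classical in
/-- Positive part of an extended real, as an extended nonnegative real. -/
def erealPos (x : EReal) : ℝ≥0∞ := if x = ⊤ then ⊤ else ENNReal.ofReal x.toReal

/-- Energy `I_{s,V}(μ) = ∬ (K_s(x - y) + V x + V y) dμ(x) dμ(y) ∈ [-∞, +∞]`, defined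
as the difference of the lower integrals of the positive and negative parts of the
integrand. -/
def energy (d : ℕ) (s : ℝ) (V : Esp d → ℝ) (μ : Measure (Esp d)) : EReal :=
  ((∫⁻ p : Esp d × Esp d,
      erealPos (rieszK d s (p.1 - p.2) + (V p.1 : EReal) + (V p.2 : EReal))
        ∂(μ.prod μ) : ℝ≥0∞) : EReal)
  - ((∫⁻ p : Esp d × Esp d,
      erealPos (-(rieszK d s (p.1 - p.2) + (V p.1 : EReal) + (V p.2 : EReal)))
        ∂(μ.prod μ) : ℝ≥0∞) : EReal)

/-- The uniform (rotation invariant) Borel probability measure on the centered sphere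
of radius `R` in `ℝ^d`, realized as the pushforward of the normalized Lebesgue measure
on the unit ball by the radial projection `x ↦ (R/‖x‖) • x`. -/
def sphereUniform (d : ℕ) (R : ℝ) : Measure (Esp d) :=
  Measure.map (fun x => (R / ‖x‖) • x)
    ((volume (Metric.ball (0 : Esp d) 1))⁻¹ • volume.restrict (Metric.ball (0 : Esp d) 1))

open Classical in
/-- Real-valued Riesz kernel (junk value `0` at the origin), used for potentials where
the singularity is negligible. -/
def rieszKr (d : ℕ) (s : ℝ) (x : Esp d) : ℝ :=
  if 0 < s then ‖x‖ ^ (-s)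
  else if s = 0 then -Real.log ‖x‖
  else -(‖x‖ ^ (-s))

/-- Surface area `|S^(d-1)| = 2 π^(d/2) / Γ(d/2)` of the unit sphere in `ℝ^d`. -/
def surf (d : ℕ) : ℝ := 2 * Real.pi ^ ((d : ℝ) / 2) / Real.Gamma ((d : ℝ) / 2)

/-- The constant `τ_(d-1) = Γ(d/2) / (Γ(1/2) Γ((d-1)/2))` from the Funk-Hecke formula. -/
def tau (d : ℕ) : ℝ :=
  Real.Gamma ((d : ℝ) / 2) / (Real.Gamma (1 / 2) * Real.Gamma (((d : ℝ) - 1) / 2))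

/-- Rising factorial (Pochhammer symbol) `(x)_k = x (x+1) ⋯ (x+k-1)`. -/
def risingFact (x : ℝ) (k : ℕ) : ℝ := (ascPochhammer ℝ k).eval x

/-- Gauss hypergeometric function `₂F₁(a, b; c; z)` as a sum of its defining series. -/
def hyp2F1 (a b c z : ℝ) : ℝ :=
  ∑' k : ℕ, (risingFact a k * risingFact b k) / (risingFact c k * (k.factorial : ℝ)) * z ^ k

/-- Laplacian on `ℝ^d`: sum of the second partial derivatives along the standard basis. -/
def lap (d : ℕ) (f : Esp d → ℝ) (x : Esp d) : ℝ :=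
  ∑ i : Fin d,
    fderiv ℝ (fun y => fderiv ℝ f y (EuclideanSpace.single i 1)) x (EuclideanSpace.single i 1)

/-- Double factorial of an integer, with the convention `k‼ = 1` for `k ≤ 0`. -/
def dfact (k : ℤ) : ℝ := if k ≤ 0 then 1 else (Nat.doubleFactorial k.toNat : ℝ)

/-- The constant `C_(d,n) = (-1)^(n-1) (d-4)‼ (2n-2)‼ / (d-2n-2)‼`. -/
def Cdn (d n : ℕ) : ℝ :=
  (-1 : ℝ) ^ (n - 1) * dfact ((d : ℤ) - 4) * dfact (2 * (n : ℤ) - 2) / dfact ((d : ℤ) - 2 * n - 2)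

/-- The constant `c_d`: `2π` if `d = 2` and `(d-2) · 2 π^(d/2) / Γ(d/2)` otherwise. -/
def cd (d : ℕ) : ℝ :=
  if d = 2 then 2 * Real.pi
  else ((d : ℝ) - 2) * 2 * Real.pi ^ ((d : ℝ) / 2) / Real.Gamma ((d : ℝ) / 2)

/-! Splitting the unit mass equally between `0` and a point `x` with `‖x‖ = r` gives energy
`γ r ^ α - r ^ (-s) / 2`: the confinement cost `γ r ^ α` is beaten by the attraction gain
`r ^ (-s) / 2` for small `r`, because `α > -s`. -/

-- The convention `K_s(0) = 0` agrees with `-‖0‖ ^ (-s)` because `-s ≠ 0`.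
lemma rieszK_of_neg {d : ℕ} {s : ℝ} (hs : s < 0) (x : Esp d) :
    rieszK d s x = ((-‖x‖ ^ (-s) : ℝ) : EReal) := by
  by_cases hx : x = 0
  · simp [rieszK, hx, hs.not_ge, Real.zero_rpow (neg_ne_zero.mpr hs.ne)]
  · simp [rieszK, hx, hs.not_gt, hs.ne]

lemma erealPos_coe (c : ℝ) : erealPos c = ENNReal.ofReal c := by
  simp [erealPos]

lemma coe_lintegral_ofReal_sub_coe_lintegral_ofReal_neg {Ω : Type*} [MeasurableSpace Ω]
    {ν : Measure Ω} {f : Ω → ℝ} (hf : Integrable f ν) :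
    ((∫⁻ ω, ENNReal.ofReal (f ω) ∂ν : ℝ≥0∞) : EReal)
      - ((∫⁻ ω, ENNReal.ofReal (-f ω) ∂ν : ℝ≥0∞) : EReal) = ((∫ ω, f ω ∂ν : ℝ) : EReal) := by
  rw [integral_eq_lintegral_pos_part_sub_lintegral_neg_part hf, EReal.coe_sub,
    EReal.coe_ennreal_toReal hf.lintegral_lt_top.ne,
    EReal.coe_ennreal_toReal (by simpa using hf.neg.lintegral_lt_top.ne)]

def energyIntegrand (d : ℕ) (s : ℝ) (V : Esp d → ℝ) (p : Esp d × Esp d) : ℝ :=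
  -‖p.1 - p.2‖ ^ (-s) + V p.1 + V p.2

lemma energy_eq_integral {d : ℕ} {s : ℝ} {V : Esp d → ℝ} {μ : Measure (Esp d)} (hs : s < 0)
    (hint : Integrable (energyIntegrand d s V) (μ.prod μ)) :
    energy d s V μ = ((∫ p, energyIntegrand d s V p ∂(μ.prod μ) : ℝ) : EReal) := by
  have hcoe (p : Esp d × Esp d) : rieszK d s (p.1 - p.2) + (V p.1 : EReal) + (V p.2 : EReal)
      = (energyIntegrand d s V p : EReal) := by
    rw [rieszK_of_neg hs, energyIntegrand]; norm_cast
  simp only [energy, hcoe, ← EReal.coe_neg, erealPos_coe]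
  exact coe_lintegral_ofReal_sub_coe_lintegral_ofReal_neg hint

section DiracMean

variable {α : Type*} [MeasurableSpace α]

def diracMean (x y : α) : Measure α := (2 : ℝ≥0∞)⁻¹ • (Measure.dirac x + Measure.dirac y)

instance isProbabilityMeasure_diracMean (x y : α) : IsProbabilityMeasure (diracMean x y) := by
  constructor
  simp [diracMean, ENNReal.inv_two_add_inv_two]

lemma diracMean_self (x : α) : diracMean x x = Measure.dirac x := by
  rw [diracMean, ← two_smul ℝ≥0∞, smul_smul,
    ENNReal.inv_mul_cancel two_ne_zero ENNReal.ofNat_ne_top, one_smul]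

variable {β : Type*} [MeasurableSpace β]

lemma diracMean_prod_diracMean (x y : α) (x' y' : β) :
    (diracMean x y).prod (diracMean x' y') = (4 : ℝ≥0∞)⁻¹ •
      (Measure.dirac (x, x') + Measure.dirac (x, y') + Measure.dirac (y, x')
        + Measure.dirac (y, y')) := by
  have hquarter : (2 : ℝ≥0∞)⁻¹ * 2⁻¹ = 4⁻¹ := by
    rw [← ENNReal.mul_inv (by simp) (by simp)]; norm_num
  rw [diracMean, diracMean, Measure.prod_smul_left, Measure.prod_smul_right, smul_smul, hquarter,
    Measure.add_prod, Measure.prod_add, Measure.prod_add, Measure.dirac_prod_dirac,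
    Measure.dirac_prod_dirac, Measure.dirac_prod_dirac, Measure.dirac_prod_dirac, ← add_assoc]

variable [MeasurableSingletonClass α] [MeasurableSingletonClass β]
  {E : Type*} [NormedAddCommGroup E]

lemma integrable_diracMean_prod_diracMean (g : α × β → E) (x y : α) (x' y' : β) :
    Integrable g ((diracMean x y).prod (diracMean x' y')) := by
  rw [diracMean_prod_diracMean]
  refine Integrable.smul_measure ?_ (by simp)
  simp only [integrable_add_measure]
  exact ⟨⟨⟨integrable_dirac enorm_lt_top, integrable_dirac enorm_lt_top⟩,
    integrable_dirac enorm_lt_top⟩, integrable_dirac enorm_lt_top⟩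

lemma integral_diracMean_prod_diracMean [NormedSpace ℝ E] [CompleteSpace E] (g : α × β → E)
    (x y : α) (x' y' : β) :
    ∫ p, g p ∂(diracMean x y).prod (diracMean x' y')
      = (4 : ℝ)⁻¹ • (g (x, x') + g (x, y') + g (y, x') + g (y, y')) := by
  have hint (p : α × β) : Integrable g (Measure.dirac p) := integrable_dirac enorm_lt_top
  rw [diracMean_prod_diracMean, integral_smul_measure, integral_add_measure,
    integral_add_measure, integral_add_measure]
  all_goals simp [integral_dirac, integrable_add_measure, hint]

end DiracMean

lemma energy_diracMean {d : ℕ} {s : ℝ} (V : Esp d → ℝ) (hs : s < 0) (x y : Esp d) :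
    energy d s V (diracMean x y) = ((V x + V y - ‖x - y‖ ^ (-s) / 2 : ℝ) : EReal) := by
  rw [energy_eq_integral hs (integrable_diracMean_prod_diracMean _ _ _ _ _),
    integral_diracMean_prod_diracMean]
  simp only [energyIntegrand, sub_self, norm_zero, zero_rpow (neg_ne_zero.mpr hs.ne),
    norm_sub_rev y x, smul_eq_mul]
  congr 1
  ring

lemma exists_pos_mul_rpow_lt_rpow {a b : ℝ} (hba : b < a) (c : ℝ) :
    ∃ r > 0, c * r ^ a < r ^ b := by
  set r := (|c| + 1)⁻¹ ^ (a - b)⁻¹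
  have hr : 0 < r := rpow_pos_of_pos (by positivity) _
  have hrab : r ^ (a - b) = (|c| + 1)⁻¹ := rpow_inv_rpow (by positivity) (sub_pos.2 hba).ne'
  have hsplit : r ^ a = r ^ (a - b) * r ^ b := by rw [← rpow_add hr]; ring_nf
  have hc : c / (|c| + 1) < 1 := (div_lt_one (by positivity)).2 (by linarith [le_abs_self c])
  refine ⟨r, hr, ?_⟩
  calc c * r ^ a = c / (|c| + 1) * r ^ b := by rw [hsplit, hrab]; ring
    _ < 1 * r ^ b := mul_lt_mul_of_pos_right hc (rpow_pos_of_pos hr b)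
    _ = r ^ b := one_mul _

theorem statement18_general (d : ℕ) (hd : 1 ≤ d) (s γ α : ℝ)
    (hs2 : s < 0) (hα : -s < α) :
    energy d s (fun x => γ * ‖x‖ ^ α) (Measure.dirac 0) = 0
    ∧ ∃ μ : Measure (Esp d), IsProbabilityMeasure μ
        ∧ energy d s (fun x => γ * ‖x‖ ^ α) μ
            < energy d s (fun x => γ * ‖x‖ ^ α) (Measure.dirac 0) := by
  set V : Esp d → ℝ := fun x => γ * ‖x‖ ^ α
  have hV0 : V 0 = 0 := by simp [V, zero_rpow (by linarith : α ≠ 0)]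
  have hdirac : energy d s V (Measure.dirac 0) = 0 := by
    rw [← diracMean_self, energy_diracMean V hs2]
    simp [hV0, zero_rpow (neg_ne_zero.mpr hs2.ne)]
  obtain ⟨r, hr, hlt⟩ := exists_pos_mul_rpow_lt_rpow hα (2 * γ)
  have : Nonempty (Fin d) := ⟨⟨0, hd⟩⟩
  obtain ⟨x, hx⟩ := exists_norm_eq (Esp d) hr.le
  refine ⟨hdirac, diracMean 0 x, inferInstance, ?_⟩
  have hVx : V x = γ * r ^ α := by rw [← hx]
  rw [hdirac, energy_diracMean V hs2, hV0, hVx, zero_sub, norm_neg, hx]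
  exact_mod_cast (by linarith : 0 + γ * r ^ α - r ^ (-s) / 2 < 0)

theorem statement18 (d : ℕ) (hd : 1 ≤ d) (s γ α : ℝ)
    (hs1 : -2 < s) (hs2 : s < 0) (hγ : 0 < γ) (hα : -s < α) :
    energy d s (fun x => γ * ‖x‖ ^ α) (Measure.dirac 0) = 0
    ∧ ∃ μ : Measure (Esp d), IsProbabilityMeasure μ
        ∧ energy d s (fun x => γ * ‖x‖ ^ α) μ
            < energy d s (fun x => γ * ‖x‖ ^ α) (Measure.dirac 0) :=
  statement18_general d hd s γ α hs2 hα
end
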